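/- Let B = (b₁,…,bₙ) ∈ ℝ^{d×n} be an LLL-reduced basis with Gram–Schmidt orthogonalization b̃₁,…,b̃ₙ, let γ ≥ 2 be real, define α₁ := 1 and αᵢ := max{α_{i−1}, ⌈‖b̃ᵢ‖/(γ^i·‖b₁‖)⌉} for 2 ≤ i ≤ n, and let A : ℝ^d → ℝ^d be the linear map with A b̃ᵢ = b̃ᵢ/αᵢ for all i and A y = y for all y orthogonal to span(b₁,…,bₙ). Then B'' := (A b₁,…,A bₙ) is an LLL-reduced basis and for all i, ‖b''₁‖/2^n ≤ ‖b̃''ᵢ‖ ≤ ‖b''ᵢ‖ ≤ (2γ)^i·‖b''₁‖, where b̃''ᵢ denotes the i-th Gram–Schmidt vector of B''. -/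

import Mathlib

open scoped RealInnerProductSpace BigOperators

noncomputable section

/-- The set of integer linear combinations of `B 0, …, B (n-1)`. -/
def zspan {d n : ℕ} (B : Fin n → EuclideanSpace ℝ (Fin d)) : Set (EuclideanSpace ℝ (Fin d)) :=
  {x | ∃ c : Fin n → ℤ, x = ∑ i, (c i : ℝ) • B i}

/-- `L` is a lattice of rank `n`: the ℤ-span of `n` ℝ-linearly independent vectors. -/
def IsLattice {d : ℕ} (L : Set (EuclideanSpace ℝ (Fin d))) (n : ℕ) : Prop :=
  ∃ B : Fin n → EuclideanSpace ℝ (Fin d), LinearIndependent ℝ B ∧ L = zspan B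

/-- The dual set `S* := {w ∈ span_ℝ S : ⟨w,y⟩ ∈ ℤ for all y ∈ S}`. -/
def dualSet {d : ℕ} (S : Set (EuclideanSpace ℝ (Fin d))) : Set (EuclideanSpace ℝ (Fin d)) :=
  {w | w ∈ Submodule.span ℝ S ∧ ∀ y ∈ S, ∃ m : ℤ, ⟪w, y⟫ = (m : ℝ)}

/-- Orthogonal projection onto the orthogonal complement of `span_ℝ S`. -/
def projPerp {d : ℕ} (S : Set (EuclideanSpace ℝ (Fin d))) (x : EuclideanSpace ℝ (Fin d)) : EuclideanSpace ℝ (Fin d) :=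
  (Submodule.orthogonalProjectionOnto (Submodule.span ℝ S)ᗮ x : EuclideanSpace ℝ (Fin d))

/-- `det(ℒ) = √(det(BᵀB))`, computed from a basis `B` via its Gram matrix. -/
def gramDet {d n : ℕ} (B : Fin n → EuclideanSpace ℝ (Fin d)) : ℝ :=
  Real.sqrt (Matrix.det (Matrix.of fun i j => ⟪B i, B j⟫))

/-- The Gram–Schmidt orthogonalization `b̃ᵢ = Π_{{b₁,…,b_(i-1)}^⊥}(bᵢ)`. -/
def gsVec {d n : ℕ} (B : Fin n → EuclideanSpace ℝ (Fin d)) (i : Fin n) : EuclideanSpace ℝ (Fin d) :=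
  projPerp (B '' {j | j < i}) (B i)

/-- The Gram–Schmidt coefficients `μ_(i,j) = ⟨b̃ᵢ, bⱼ⟩ / ‖b̃ᵢ‖²`. -/
def mu {d n : ℕ} (B : Fin n → EuclideanSpace ℝ (Fin d)) (i j : Fin n) : ℝ :=
  ⟪gsVec B i, B j⟫ / ‖gsVec B i‖ ^ 2

/-- `B` is an LLL-reduced basis (with parameter δ = 3/4). -/
def IsLLLReduced {d n : ℕ} (B : Fin n → EuclideanSpace ℝ (Fin d)) : Prop :=
  LinearIndependent ℝ B ∧
  (∀ i j : Fin n, i < j → |mu B i j| ≤ 1 / 2) ∧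
  (∀ (i : ℕ) (h : i + 1 < n),
    (3 / 4) * ‖gsVec B ⟨i, Nat.lt_of_succ_lt h⟩‖ ^ 2 ≤
      ‖gsVec B ⟨i + 1, h⟩‖ ^ 2 +
        (mu B ⟨i, Nat.lt_of_succ_lt h⟩ ⟨i + 1, h⟩) ^ 2 * ‖gsVec B ⟨i, Nat.lt_of_succ_lt h⟩‖ ^ 2)


/-!
Writing `bᵢ = b̃ᵢ + ∑_{k<i} μ_{k,i} b̃ₖ` and applying `A` gives
`b''ᵢ = b̃ᵢ/αᵢ + ∑_{k<i} μ_{k,i} b̃ₖ/αₖ`, so the Gram–Schmidt vectors of `B''` are `b̃ᵢ/αᵢ` and its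
coefficients `μ` are those of `B`; in particular `B''` is size-reduced. The ceiling in the
definition of `α` gives `‖b̃ᵢ‖/αᵢ ≤ γ^(i+1) ‖b₁‖`, counting `i` from `0`.

For the Lovász condition at `k`, either `α_{k+1} = α_k`, and it is the old condition divided by
`α_k²`, or `α_{k+1} = ⌈r⌉ ≥ 2` with `⌈r⌉ < 2r`, which forces
`‖b̃''_{k+1}‖ > γ^(k+2) ‖b₁‖ / 2 ≥ γ^(k+1) ‖b₁‖ ≥ ‖b̃''_k‖`, and it holds trivially. The same
dichotomy gives the lower bound: from `k` to `k+1` the norm `‖b̃''_k‖` either drops by at most a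
factor `2`, as in any LLL-reduced basis, or jumps above `‖b₁‖`. Size reduction gives the upper
bound `‖b''ᵢ‖ ≤ (i+1) max_{k≤i} ‖b̃''_k‖`.
-/

open Submodule InnerProductSpace

section GramSchmidt

variable {d n : ℕ}

lemma mem_orthogonal_span_of_forall_inner {S : Set (EuclideanSpace ℝ (Fin d))}
    {v : EuclideanSpace ℝ (Fin d)} (h : ∀ u ∈ S, ⟪u, v⟫ = 0) : v ∈ (span ℝ S)ᗮ :=
  (span_singleton_le_iff_mem _ _).mp <| isOrtho_iff_le.mp <|
    (isOrtho_span.mpr fun u hu _ hw => Set.mem_singleton_iff.mp hw ▸ h u hu).symm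

lemma projPerp_eq_of_sub_mem {S : Set (EuclideanSpace ℝ (Fin d))}
    {x v : EuclideanSpace ℝ (Fin d)} (hv : v ∈ (span ℝ S)ᗮ) (hxv : x - v ∈ span ℝ S) :
    projPerp S x = v :=
  eq_starProjection_of_mem_orthogonal hv (le_orthogonal_orthogonal _ hxv)

lemma gsVec_mem_orthogonal (B : Fin n → EuclideanSpace ℝ (Fin d)) (i : Fin n) :
    gsVec B i ∈ (span ℝ (B '' {j | j < i}))ᗮ :=
  (orthogonalProjectionOnto _ _).2

lemma sub_gsVec_mem_span (B : Fin n → EuclideanSpace ℝ (Fin d)) (i : Fin n) :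
    B i - gsVec B i ∈ span ℝ (B '' {j | j < i}) := by
  rw [← orthogonal_orthogonal (span ℝ (B '' {j | j < i}))]
  exact sub_starProjection_mem_orthogonal _

lemma norm_gsVec_le (B : Fin n → EuclideanSpace ℝ (Fin d)) (i : Fin n) :
    ‖gsVec B i‖ ≤ ‖B i‖ :=
  norm_starProjection_apply_le _ _

lemma gsVec_zero (hn : 0 < n) (B : Fin n → EuclideanSpace ℝ (Fin d)) :
    gsVec B ⟨0, hn⟩ = B ⟨0, hn⟩ := by
  refine projPerp_eq_of_sub_mem ?_ (by simp)
  simp [Fin.lt_def]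

lemma gsVec_eq_gramSchmidt (B : Fin n → EuclideanSpace ℝ (Fin d)) :
    gsVec B = gramSchmidt ℝ B := by
  ext1 i
  have hK : span ℝ (B '' {j | j < i}) = span ℝ (gramSchmidt ℝ B '' Set.Iio i) :=
    (span_gramSchmidt_Iio ℝ B i).symm
  refine projPerp_eq_of_sub_mem ?_ ?_ <;> rw [hK]
  · refine mem_orthogonal_span_of_forall_inner ?_
    rintro _ ⟨k, hk, rfl⟩
    exact gramSchmidt_orthogonal ℝ B hk.ne
  · rw [sub_eq_iff_eq_add'.mpr (gramSchmidt_def'' ℝ B i)]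
    exact sum_mem fun k hk => smul_mem _ _ (subset_span ⟨k, Finset.mem_Iio.mp hk, rfl⟩)

lemma span_gsVec_image_Iio (B : Fin n → EuclideanSpace ℝ (Fin d)) (i : Fin n) :
    span ℝ (gsVec B '' {j | j < i}) = span ℝ (B '' {j | j < i}) := by
  rw [gsVec_eq_gramSchmidt]
  exact span_gramSchmidt_Iio ℝ B i

lemma span_range_gsVec (B : Fin n → EuclideanSpace ℝ (Fin d)) :
    span ℝ (Set.range (gsVec B)) = span ℝ (Set.range B) := by
  rw [gsVec_eq_gramSchmidt]
  exact span_gramSchmidt ℝ B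

lemma inner_gsVec_gsVec_of_ne (B : Fin n → EuclideanSpace ℝ (Fin d)) {i j : Fin n}
    (h : i ≠ j) : ⟪gsVec B i, gsVec B j⟫ = 0 := by
  rw [gsVec_eq_gramSchmidt]
  exact gramSchmidt_orthogonal ℝ B h

lemma eq_gsVec_add_sum_mu_smul (B : Fin n → EuclideanSpace ℝ (Fin d)) (i : Fin n) :
    B i = gsVec B i + ∑ k ∈ Finset.Iio i, mu B k i • gsVec B k := by
  simp only [mu, gsVec_eq_gramSchmidt]
  exact gramSchmidt_def'' ℝ B i

end GramSchmidt

section Rescaling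

variable {d n : ℕ} {B : Fin n → EuclideanSpace ℝ (Fin d)} {c : Fin n → ℝ}
  {A : EuclideanSpace ℝ (Fin d) →ₗ[ℝ] EuclideanSpace ℝ (Fin d)}

lemma map_span_gsVec_image (hc : ∀ i, c i ≠ 0) (hA : ∀ i, A (gsVec B i) = c i • gsVec B i)
    (s : Set (Fin n)) : (span ℝ (gsVec B '' s)).map A = span ℝ (gsVec B '' s) := by
  rw [map_span, Set.image_image]
  simp only [hA]
  apply le_antisymm <;> rw [span_le] <;> rintro _ ⟨i, hi, rfl⟩
  · exact smul_mem _ _ (subset_span ⟨i, hi, rfl⟩)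
  · rw [← inv_smul_smul₀ (hc i) (gsVec B i)]
    exact smul_mem _ _ (subset_span ⟨i, hi, rfl⟩)

lemma span_image_map_eq_span_gsVec_image (hc : ∀ i, c i ≠ 0)
    (hA : ∀ i, A (gsVec B i) = c i • gsVec B i) {s : Set (Fin n)} (hs : span ℝ (gsVec B '' s) = span ℝ (B '' s)) :
    span ℝ ((fun j => A (B j)) '' s) = span ℝ (gsVec B '' s) := by
  rw [← Set.image_image, ← map_span, ← hs, map_span_gsVec_image hc hA]

lemma gsVec_map (hc : ∀ i, c i ≠ 0) (hA : ∀ i, A (gsVec B i) = c i • gsVec B i) (i : Fin n) :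
    gsVec (fun j => A (B j)) i = c i • gsVec B i := by
  have hK := span_image_map_eq_span_gsVec_image hc hA (span_gsVec_image_Iio B i)
  refine projPerp_eq_of_sub_mem ?_ ?_ <;> rw [hK]
  · rw [span_gsVec_image_Iio]
    exact smul_mem _ _ (gsVec_mem_orthogonal B i)
  · rw [← hA, ← map_sub, ← map_span_gsVec_image hc hA, span_gsVec_image_Iio]
    exact mem_map_of_mem (sub_gsVec_mem_span B i)

lemma LinearIndependent.map_of_gsVec_eq_smul (hB : LinearIndependent ℝ B) (hc : ∀ i, c i ≠ 0)
    (hA : ∀ i, A (gsVec B i) = c i • gsVec B i) : LinearIndependent ℝ (fun j => A (B j)) := by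
  have hspan : span ℝ (Set.range fun j => A (B j)) = span ℝ (Set.range B) := by
    simp only [← Set.image_univ]
    rw [span_image_map_eq_span_gsVec_image hc hA] <;> simp only [Set.image_univ, span_range_gsVec]
  rw [linearIndependent_iff_card_eq_finrank_span, Set.finrank, hspan]
  rwa [linearIndependent_iff_card_eq_finrank_span, Set.finrank] at hB

lemma inner_gsVec_map_of_mem_span (hA : ∀ i, A (gsVec B i) = c i • gsVec B i) (k : Fin n)
    {x : EuclideanSpace ℝ (Fin d)} (hx : x ∈ span ℝ (Set.range (gsVec B))) :
    ⟪gsVec B k, A x⟫ = c k * ⟪gsVec B k, x⟫ := by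
  induction hx using span_induction with
  | mem _ hy =>
    obtain ⟨j, rfl⟩ := hy
    rw [hA, real_inner_smul_right]
    rcases eq_or_ne k j with rfl | hkj
    · rfl
    · rw [inner_gsVec_gsVec_of_ne B hkj, mul_zero, mul_zero]
  | zero => simp
  | add x y _ _ hx hy => rw [map_add, inner_add_right, inner_add_right, hx, hy, mul_add]
  | smul r x _ hx =>
    rw [map_smul, real_inner_smul_right, real_inner_smul_right, hx, mul_left_comm]

lemma mu_map (hc : ∀ i, c i ≠ 0) (hA : ∀ i, A (gsVec B i) = c i • gsVec B i) (k i : Fin n) :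
    mu (fun j => A (B j)) k i = mu B k i := by
  have hBi : B i ∈ span ℝ (Set.range (gsVec B)) :=
    span_range_gsVec B ▸ subset_span (Set.mem_range_self i)
  rw [mu, mu, gsVec_map hc hA, real_inner_smul_left, inner_gsVec_map_of_mem_span hA k hBi,
    norm_smul, mul_pow, Real.norm_eq_abs, sq_abs, ← mul_assoc, ← sq]
  exact mul_div_mul_left _ _ (pow_ne_zero 2 (hc k))

end Rescaling

section LLL

variable {d n : ℕ} {B : Fin n → EuclideanSpace ℝ (Fin d)}

lemma IsLLLReduced.norm_gsVec_le_two_mul (hB : IsLLLReduced B) (k : ℕ) (h : k + 1 < n) :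
    ‖gsVec B ⟨k, Nat.lt_of_succ_lt h⟩‖ ≤ 2 * ‖gsVec B ⟨k + 1, h⟩‖ := by
  have hlov := hB.2.2 k h
  have hmu : mu B ⟨k, Nat.lt_of_succ_lt h⟩ ⟨k + 1, h⟩ ^ 2 ≤ 1 / 4 := by
    have := hB.2.1 ⟨k, Nat.lt_of_succ_lt h⟩ ⟨k + 1, h⟩ (Fin.mk_lt_mk.mpr k.lt_succ_self)
    nlinarith [abs_nonneg (mu B ⟨k, Nat.lt_of_succ_lt h⟩ ⟨k + 1, h⟩),
      sq_abs (mu B ⟨k, Nat.lt_of_succ_lt h⟩ ⟨k + 1, h⟩)]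
  nlinarith [norm_nonneg (gsVec B ⟨k, Nat.lt_of_succ_lt h⟩), norm_nonneg (gsVec B ⟨k + 1, h⟩),
    sq_nonneg ‖gsVec B ⟨k, Nat.lt_of_succ_lt h⟩‖]

lemma IsLLLReduced.map_of_gsVec_eq_smul (hB : IsLLLReduced B) {c : Fin n → ℝ}
    (hc : ∀ i, c i ≠ 0) {A : EuclideanSpace ℝ (Fin d) →ₗ[ℝ] EuclideanSpace ℝ (Fin d)}
    (hA : ∀ i, A (gsVec B i) = c i • gsVec B i)
    (hstep : ∀ (k : ℕ) (h : k + 1 < n), c ⟨k + 1, h⟩ = c ⟨k, Nat.lt_of_succ_lt h⟩ ∨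
      ‖gsVec (fun j => A (B j)) ⟨k, Nat.lt_of_succ_lt h⟩‖ ≤
        ‖gsVec (fun j => A (B j)) ⟨k + 1, h⟩‖) :
    IsLLLReduced (fun j => A (B j)) := by
  refine ⟨hB.1.map_of_gsVec_eq_smul hc hA, fun i j hij => ?_, fun k h => ?_⟩
  · rw [mu_map hc hA]
    exact hB.2.1 i j hij
  rw [mu_map hc hA]
  rcases hstep k h with hck | hle
  · rw [gsVec_map hc hA, gsVec_map hc hA, hck, norm_smul, norm_smul]
    nlinarith [mul_le_mul_of_nonneg_left (hB.2.2 k h) (sq_nonneg ‖c ⟨k, Nat.lt_of_succ_lt h⟩‖)]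
  · nlinarith [mul_self_le_mul_self (norm_nonneg _) hle,
      mul_nonneg (sq_nonneg (mu B ⟨k, Nat.lt_of_succ_lt h⟩ ⟨k + 1, h⟩))
        (sq_nonneg ‖gsVec (fun j => A (B j)) ⟨k, Nat.lt_of_succ_lt h⟩‖)]

lemma norm_le_of_abs_mu_le_one (i : Fin n) {M : ℝ} (hmu : ∀ k < i, |mu B k i| ≤ 1)
    (hM : ∀ k ≤ i, ‖gsVec B k‖ ≤ M) : ‖B i‖ ≤ ((i : ℕ) + 1) * M := by
  have hterm : ∀ k ∈ Finset.Iio i, ‖mu B k i • gsVec B k‖ ≤ M := fun k hk => by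
    have hk := Finset.mem_Iio.mp hk
    rw [norm_smul, Real.norm_eq_abs, ← one_mul M]
    exact mul_le_mul (hmu k hk) (hM k hk.le) (norm_nonneg _) zero_le_one
  calc ‖B i‖ = ‖gsVec B i + ∑ k ∈ Finset.Iio i, mu B k i • gsVec B k‖ :=
        congrArg norm (eq_gsVec_add_sum_mu_smul B i)
    _ ≤ M + ∑ _k ∈ Finset.Iio i, M :=
        norm_add_le_of_le (hM i le_rfl) ((norm_sum_le _ _).trans (Finset.sum_le_sum hterm))
    _ = ((i : ℕ) + 1) * M := by rw [Finset.sum_const, Fin.card_Iio, nsmul_eq_mul]; ring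

lemma IsLLLReduced.norm_le_of_norm_gsVec_le (hB : IsLLLReduced B) {b γ : ℝ} (hb : 0 ≤ b)
    (hγ : 1 ≤ γ) (hgs : ∀ k : Fin n, ‖gsVec B k‖ ≤ γ ^ ((k : ℕ) + 1) * b) (i : Fin n) :
    ‖B i‖ ≤ (2 * γ) ^ ((i : ℕ) + 1) * b := by
  have hnorm := norm_le_of_abs_mu_le_one i (M := γ ^ ((i : ℕ) + 1) * b)
    (fun k hk => (hB.2.1 k i hk).trans (by norm_num))
    (fun k hk => (hgs k).trans (by gcongr; exact hk))
  have hcount : ((i : ℕ) : ℝ) + 1 ≤ 2 ^ ((i : ℕ) + 1) := by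
    exact_mod_cast (Nat.lt_two_pow_self (n := (i : ℕ) + 1)).le
  rw [mul_pow, mul_assoc]
  exact hnorm.trans (mul_le_mul_of_nonneg_right hcount (by positivity))

end LLL

section CeilingRecurrence

variable {n : ℕ} {α x : Fin n → ℝ} {b γ : ℝ}

lemma max_ceil_eq_left_or_lt_two_mul {a r : ℝ} (ha : 1 ≤ a) :
    max a (⌈r⌉ : ℝ) = a ∨ max a (⌈r⌉ : ℝ) < 2 * r := by
  rcases le_or_gt (⌈r⌉ : ℝ) a with h | h
  · exact Or.inl (max_eq_left h)
  · right
    have h1 : (1 : ℤ) < ⌈r⌉ := by exact_mod_cast ha.trans_lt h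
    have hr : 1 < r := by exact_mod_cast Int.lt_ceil.mp h1
    rw [max_eq_right h.le]
    linarith [Int.ceil_lt_add_one r]

lemma one_le_of_eq_max (hn : 0 < n) (hα0 : α ⟨0, hn⟩ = 1) {r : (i : ℕ) → i + 1 < n → ℝ}
    (hαrec : ∀ (i : ℕ) (h : i + 1 < n), α ⟨i + 1, h⟩ = max (α ⟨i, Nat.lt_of_succ_lt h⟩) (r i h))
    (i : Fin n) : 1 ≤ α i := by
  obtain ⟨k, hk⟩ := i
  induction k with
  | zero => exact hα0.ge
  | succ k ih =>
    exact (ih (Nat.lt_of_succ_lt hk)).trans ((hαrec k hk).ge.trans' (le_max_left _ _))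

lemma div_le_of_eq_max_ceil (hn : 0 < n) (hb : 0 < b) (hγ : 1 ≤ γ) (hx0 : x ⟨0, hn⟩ = b)
    (hα0 : α ⟨0, hn⟩ = 1)
    (hαrec : ∀ (i : ℕ) (h : i + 1 < n),
      α ⟨i + 1, h⟩ = max (α ⟨i, Nat.lt_of_succ_lt h⟩) (⌈x ⟨i + 1, h⟩ / (γ ^ (i + 2) * b)⌉ : ℝ))
    (i : Fin n) : x i / α i ≤ γ ^ ((i : ℕ) + 1) * b := by
  obtain ⟨_ | k, hk⟩ := i
  · rw [hx0, hα0, div_one, zero_add, pow_one]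
    exact le_mul_of_one_le_left hb.le hγ
  · have hα : 0 < α ⟨k + 1, hk⟩ := one_pos.trans_le (one_le_of_eq_max hn hα0 hαrec _)
    have hceil := (Int.le_ceil _).trans ((le_max_right _ _).trans (hαrec k hk).ge)
    rw [div_le_iff₀ (by positivity)] at hceil
    rw [div_le_iff₀ hα]
    linarith

lemma eq_or_lt_div_of_eq_max_ceil (hn : 0 < n) (hb : 0 < b) (hγ : 2 ≤ γ)
    (hα0 : α ⟨0, hn⟩ = 1)
    (hαrec : ∀ (i : ℕ) (h : i + 1 < n),
      α ⟨i + 1, h⟩ = max (α ⟨i, Nat.lt_of_succ_lt h⟩) (⌈x ⟨i + 1, h⟩ / (γ ^ (i + 2) * b)⌉ : ℝ))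
    (k : ℕ) (h : k + 1 < n) :
    α ⟨k + 1, h⟩ = α ⟨k, Nat.lt_of_succ_lt h⟩ ∨
      γ ^ (k + 1) * b < x ⟨k + 1, h⟩ / α ⟨k + 1, h⟩ := by
  have hα1 := one_le_of_eq_max hn hα0 hαrec
  rw [hαrec k h]
  refine (max_ceil_eq_left_or_lt_two_mul (hα1 _)).imp id fun hlt => ?_
  rw [← hαrec k h] at hlt ⊢
  have hpow : 2 * γ ^ (k + 1) ≤ γ ^ (k + 2) := by
    rw [pow_succ γ (k + 1)]
    nlinarith [pow_pos (zero_lt_two.trans_le hγ) (k + 1)]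
  rw [← mul_div_assoc, lt_div_iff₀ (by positivity)] at hlt
  have hα : 0 < α ⟨k + 1, h⟩ := one_pos.trans_le (hα1 _)
  rw [lt_div_iff₀ hα]
  nlinarith [mul_le_mul_of_nonneg_right hpow (mul_pos hb hα).le]

lemma le_two_pow_mul_of_le_two_mul_or_le (hn : 0 < n) (hx : ∀ i, 0 ≤ x i)
    (hstep : ∀ (k : ℕ) (h : k + 1 < n),
      x ⟨k, Nat.lt_of_succ_lt h⟩ ≤ 2 * x ⟨k + 1, h⟩ ∨ x ⟨0, hn⟩ ≤ x ⟨k + 1, h⟩)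
    (i : Fin n) : x ⟨0, hn⟩ ≤ 2 ^ (i : ℕ) * x i := by
  obtain ⟨k, hk⟩ := i
  induction k with
  | zero => simp
  | succ k ih =>
    rcases hstep k hk with hle | hle
    · calc x ⟨0, hn⟩ ≤ 2 ^ k * x ⟨k, Nat.lt_of_succ_lt hk⟩ := ih (Nat.lt_of_succ_lt hk)
        _ ≤ 2 ^ k * (2 * x ⟨k + 1, hk⟩) := by gcongr
        _ = 2 ^ (k + 1) * x ⟨k + 1, hk⟩ := by ring
    · exact hle.trans (le_mul_of_one_le_left (hx _) (one_le_pow₀ one_le_two))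

lemma le_two_pow_mul_div_of_eq_max_ceil (hn : 0 < n) (hb : 0 < b) (hγ : 2 ≤ γ)
    (hx : ∀ i, 0 ≤ x i) (hx0 : x ⟨0, hn⟩ = b)
    (hx2 : ∀ (k : ℕ) (h : k + 1 < n), x ⟨k, Nat.lt_of_succ_lt h⟩ ≤ 2 * x ⟨k + 1, h⟩)
    (hα0 : α ⟨0, hn⟩ = 1)
    (hαrec : ∀ (i : ℕ) (h : i + 1 < n),
      α ⟨i + 1, h⟩ = max (α ⟨i, Nat.lt_of_succ_lt h⟩) (⌈x ⟨i + 1, h⟩ / (γ ^ (i + 2) * b)⌉ : ℝ))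
    (i : Fin n) : b ≤ 2 ^ (i : ℕ) * (x i / α i) := by
  have hα : ∀ i, 0 < α i := fun i => one_pos.trans_le (one_le_of_eq_max hn hα0 hαrec i)
  have hy0 : x ⟨0, hn⟩ / α ⟨0, hn⟩ = b := by rw [hx0, hα0, div_one]
  refine hy0 ▸ le_two_pow_mul_of_le_two_mul_or_le (x := fun i => x i / α i) hn
    (fun i => div_nonneg (hx i) (hα i).le) (fun k h => ?_) i
  refine (eq_or_lt_div_of_eq_max_ceil hn hb hγ hα0 hαrec k h).imp (fun hαk => ?_) fun hlt => ?_
  · rw [hαk, mul_div_assoc']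
    exact div_le_div_of_nonneg_right (hx2 k h) (hα _).le
  · rw [hy0]
    exact (le_mul_of_one_le_left hb.le (one_le_pow₀ (one_le_two.trans hγ))).trans hlt.le

end CeilingRecurrence

theorem stmt18_general {d n : ℕ} (hn : 0 < n) (B : Fin n → EuclideanSpace ℝ (Fin d))
    (hB : IsLLLReduced B) (γ : ℝ) (hγ : 2 ≤ γ)
    (α : Fin n → ℝ) (hα0 : α ⟨0, hn⟩ = 1)
    (hαrec : ∀ (i : ℕ) (h : i + 1 < n),
      α ⟨i + 1, h⟩ = max (α ⟨i, Nat.lt_of_succ_lt h⟩)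
        ((⌈‖gsVec B ⟨i + 1, h⟩‖ / (γ ^ (i + 2) * ‖B ⟨0, hn⟩‖)⌉ : ℤ) : ℝ))
    (A : EuclideanSpace ℝ (Fin d) →ₗ[ℝ] EuclideanSpace ℝ (Fin d))
    (hA1 : ∀ i : Fin n, A (gsVec B i) = (α i)⁻¹ • gsVec B i) :
    IsLLLReduced (fun j => A (B j)) ∧
    ∀ i : Fin n,
      ‖A (B ⟨0, hn⟩)‖ / 2 ^ n ≤ ‖gsVec (fun j => A (B j)) i‖ ∧
      ‖gsVec (fun j => A (B j)) i‖ ≤ ‖A (B i)‖ ∧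
      ‖A (B i)‖ ≤ (2 * γ) ^ ((i : ℕ) + 1) * ‖A (B ⟨0, hn⟩)‖ := by
  set B' : Fin n → EuclideanSpace ℝ (Fin d) := fun j => A (B j)
  have hα : ∀ i, 0 < α i := fun i => one_pos.trans_le (one_le_of_eq_max hn hα0 hαrec i)
  have hc : ∀ i, (α i)⁻¹ ≠ 0 := fun i => inv_ne_zero (hα i).ne'
  have hgs : ∀ i, ‖gsVec B' i‖ = ‖gsVec B i‖ / α i := fun i => by
    rw [gsVec_map hc hA1, norm_smul, norm_inv, Real.norm_of_nonneg (hα i).le, inv_mul_eq_div]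
  have hA0 : A (B ⟨0, hn⟩) = B ⟨0, hn⟩ := by
    rw [← gsVec_zero hn B, hA1, hα0, inv_one, one_smul]
  have hb : 0 < ‖B ⟨0, hn⟩‖ := norm_pos_iff.mpr (hB.1.ne_zero _)
  have hx0 : ‖gsVec B ⟨0, hn⟩‖ = ‖B ⟨0, hn⟩‖ := congrArg norm (gsVec_zero hn B)
  have hupper : ∀ i, ‖gsVec B' i‖ ≤ γ ^ ((i : ℕ) + 1) * ‖B ⟨0, hn⟩‖ := fun i => by
    rw [hgs]
    exact div_le_of_eq_max_ceil (x := fun i => ‖gsVec B i‖) hn hb (one_le_two.trans hγ)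
      hx0 hα0 hαrec i
  have hLLL : IsLLLReduced B' := hB.map_of_gsVec_eq_smul hc hA1 fun k h =>
    (eq_or_lt_div_of_eq_max_ceil (x := fun i => ‖gsVec B i‖) hn hb hγ hα0 hαrec k h).imp
      (congrArg _) fun hlt => (hupper _).trans (by rw [hgs]; exact hlt.le)
  refine ⟨hLLL, fun i => ⟨?_, norm_gsVec_le B' i, ?_⟩⟩
  · have hlow := le_two_pow_mul_div_of_eq_max_ceil (x := fun i => ‖gsVec B i‖) hn hb hγ
      (fun _ => norm_nonneg _) hx0 hB.norm_gsVec_le_two_mul hα0 hαrec i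
    rw [hA0, div_le_iff₀ (by positivity), mul_comm, hgs]
    exact hlow.trans (mul_le_mul_of_nonneg_right (pow_le_pow_right₀ one_le_two i.2.le)
      (div_nonneg (norm_nonneg _) (hα i).le))
  · rw [hA0]
    exact hLLL.norm_le_of_norm_gsVec_le hb.le (one_le_two.trans hγ) hupper i

theorem stmt18 {d n : ℕ} (hn : 0 < n) (B : Fin n → EuclideanSpace ℝ (Fin d))
    (hB : IsLLLReduced B) (γ : ℝ) (hγ : 2 ≤ γ)
    (α : Fin n → ℝ) (hα0 : α ⟨0, hn⟩ = 1)
    (hαrec : ∀ (i : ℕ) (h : i + 1 < n),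
      α ⟨i + 1, h⟩ = max (α ⟨i, Nat.lt_of_succ_lt h⟩)
        ((⌈‖gsVec B ⟨i + 1, h⟩‖ / (γ ^ (i + 2) * ‖B ⟨0, hn⟩‖)⌉ : ℤ) : ℝ))
    (A : EuclideanSpace ℝ (Fin d) →ₗ[ℝ] EuclideanSpace ℝ (Fin d))
    (hA1 : ∀ i : Fin n, A (gsVec B i) = (α i)⁻¹ • gsVec B i)
    (hA2 : ∀ y ∈ (Submodule.span ℝ (Set.range B))ᗮ, A y = y) :
    IsLLLReduced (fun j => A (B j)) ∧
    ∀ i : Fin n,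
      ‖A (B ⟨0, hn⟩)‖ / 2 ^ n ≤ ‖gsVec (fun j => A (B j)) i‖ ∧
      ‖gsVec (fun j => A (B j)) i‖ ≤ ‖A (B i)‖ ∧
      ‖A (B i)‖ ≤ (2 * γ) ^ ((i : ℕ) + 1) * ‖A (B ⟨0, hn⟩)‖ :=
  stmt18_general hn B hB γ hγ α hα0 hαrec A hA1
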